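/- Let Γ be a subgroup of the group of linear automorphisms of V preserving q, acting on ℍ = ℙ(V⁺). For a point a ∈ ℍ let Λ_a ⊆ Abs be the set of all points of Abs that are accumulation points of the orbit Γ·a in ℙ(V). Then for any two points a, b ∈ ℍ one has Λ_a = Λ_b. -/

import Mathlib

/- STATEMENT 8: Let Γ be a subgroup of the group of linear automorphisms of V preserving q,
acting on ℍ = ℙ(V⁺).  For a point a ∈ ℍ let Λ_a ⊆ Abs be the set of all points of Abs
that are accumulation points of the orbit Γ·a in ℙ(V).  Then for any two points
a, b ∈ ℍ one has Λ_a = Λ_b. -/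

noncomputable instance projectivizationTopology (K W : Type*) [DivisionRing K] [AddCommGroup W]
    [Module K W] [TopologicalSpace W] : TopologicalSpace (Projectivization K W) :=
  inferInstanceAs (TopologicalSpace (Quotient (projectivizationSetoid K W)))

variable {V : Type*} [NormedAddCommGroup V] [NormedSpace ℝ V] [FiniteDimensional ℝ V]

/-- `q` has signature `(1, n)`. -/
def hasSigOneN (n : ℕ) (B : V →ₗ[ℝ] V →ₗ[ℝ] ℝ) : Prop :=
  ∃ b : Module.Basis (Fin (n + 1)) ℝ V,
    (∀ i j, i ≠ j → B (b i) (b j) = 0) ∧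
    (0 < B (b 0) (b 0)) ∧ ∀ i, i ≠ 0 → B (b i) (b i) < 0

/-- The hyperbolic space `ℍ = ℙ(V⁺)`. -/
def hypSet (B : V →ₗ[ℝ] V →ₗ[ℝ] ℝ) : Set (Projectivization ℝ V) :=
  {p | 0 < B p.rep p.rep}

/-- The absolute `Abs = {[x] ∈ ℙ(V) : q(x,x) = 0}`. -/
def absSet (B : V →ₗ[ℝ] V →ₗ[ℝ] ℝ) : Set (Projectivization ℝ V) :=
  {p | B p.rep p.rep = 0}

/-- The action of a linear automorphism of `V` on `ℙ(V)`. -/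
noncomputable def pmap (γ : V ≃ₗ[ℝ] V) : Projectivization ℝ V → Projectivization ℝ V :=
  Projectivization.map (γ : V →ₗ[ℝ] V) γ.injective

/-- The orbit `Γ·a` in `ℙ(V)`. -/
def porbit (Γ : Subgroup (V ≃ₗ[ℝ] V)) (a : Projectivization ℝ V) :
    Set (Projectivization ℝ V) :=
  {y | ∃ γ ∈ Γ, y = pmap γ a}

/-- `Λ_a`: the points of the absolute that are accumulation points of the orbit `Γ·a`. -/
def limitSetOf (B : V →ₗ[ℝ] V →ₗ[ℝ] ℝ) (Γ : Subgroup (V ≃ₗ[ℝ] V))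
    (a : Projectivization ℝ V) : Set (Projectivization ℝ V) :=
  {x ∈ absSet B | x ∈ closure (porbit Γ a \ {x})}

/-! Take an ultrafilter on `Γ` along which `γ • a → x ∈ Abs`, and representatives `u`, `v` of
`a`, `b`. By compactness of the unit sphere, `γ u / ‖γ u‖ → z` and `γ v / ‖γ v‖ → z'`, with
`[z] = x`, hence `q(z, z) = 0`. Since `Γ` preserves `q`, the scale-free identity
`q(α γ u, β γ v)² q(u, u) q(v, v) = q(α γ u, α γ u) q(β γ v, β γ v) q(u, v)²` passes to the
limit and gives `q(z, z') = 0`, while `q(z', z') ≥ 0`. In signature `(1, n)` the form is negative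
definite on a hyperplane, which forces `z'` onto the line of the null vector `z`; so
`γ • b → [z'] = x`, and these orbit points are never `x` because they lie in `ℍ`. -/

open Filter Topology
open Projectivization
open scoped LinearAlgebra.Projectivization

section ProjectiveSpace

variable {E : Type*} [NormedAddCommGroup E] [NormedSpace ℝ E]

namespace Projectivization

theorem continuous_mk' : Continuous (mk' ℝ : {v : E // v ≠ 0} → ℙ ℝ E) :=
  continuous_quotient_mk'

theorem mk_smul_eq {v : E} (hv : v ≠ 0) {t : ℝ} (ht : t ≠ 0) :
    mk ℝ (t • v) (smul_ne_zero ht hv) = mk ℝ v hv :=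
  (mk_eq_mk_iff' ℝ _ _ _ _).2 ⟨t, rfl⟩

theorem tendsto_mk_of_tendsto_normalize {ι : Type*} {l : Filter ι} {w : ι → E}
    (hw : ∀ i, w i ≠ 0) {z : E} (hz : z ≠ 0)
    (h : Tendsto (fun i => ‖w i‖⁻¹ • w i) l (𝓝 z)) :
    Tendsto (fun i => mk ℝ (w i) (hw i)) l (𝓝 (mk ℝ z hz)) := by
  have hinv : ∀ i, ‖w i‖⁻¹ ≠ 0 := fun i => inv_ne_zero (norm_ne_zero_iff.2 (hw i))
  have hmk : (fun i => mk ℝ (w i) (hw i)) = fun i => mk ℝ _ (smul_ne_zero (hinv i) (hw i)) :=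
    funext fun i => (mk_smul_eq (hw i) (hinv i)).symm
  rw [hmk]
  exact (continuous_mk'.tendsto ⟨z, hz⟩).comp (tendsto_subtype_rng.2 h)

noncomputable def dualProducts : ℙ ℝ E → StrongDual ℝ E → StrongDual ℝ E → ℝ :=
  Projectivization.lift (fun w f g => f w * g w / ‖(w : E)‖ ^ 2) <| by
    rintro ⟨_, hw⟩ ⟨w, -⟩ t rfl
    have ht : t ≠ 0 := by rintro rfl; exact hw (zero_smul ℝ w)
    funext f g
    simp only [map_smul, smul_eq_mul, norm_smul, Real.norm_eq_abs, mul_pow, sq_abs]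
    field_simp

theorem continuous_dualProducts : Continuous (dualProducts : ℙ ℝ E → _) := by
  refine Continuous.quotient_lift (continuous_pi fun f => continuous_pi fun g => ?_) _
  refine Continuous.div (by fun_prop) (by fun_prop) fun w => pow_ne_zero 2 ?_
  exact norm_ne_zero_iff.2 w.2

theorem dualProducts_injective : Function.Injective (dualProducts : ℙ ℝ E → _) := by
  intro p q h
  induction p with | h v hv => ?_
  induction q with | h w hw => ?_
  obtain ⟨f, hf⟩ := SeparatingDual.exists_ne_zero (R := ℝ) hv
  have hfg (g : StrongDual ℝ E) : f v * g v / ‖v‖ ^ 2 = f w * g w / ‖w‖ ^ 2 :=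
    congr_fun (congr_fun h f) g
  have hv' : ‖v‖ ≠ 0 := norm_ne_zero_iff.2 hv
  have hw' : ‖w‖ ≠ 0 := norm_ne_zero_iff.2 hw
  refine (mk_eq_mk_iff' ℝ _ _ _ _).2 ⟨f w * ‖v‖ ^ 2 / (f v * ‖w‖ ^ 2),
    (SeparatingDual.eq_iff_forall_dual_eq (R := ℝ)).2 fun g => ?_⟩
  have := hfg g
  rw [map_smul, smul_eq_mul]
  field_simp at this ⊢
  linear_combination -this

instance : T2Space (ℙ ℝ E) :=
  .of_injective_continuous dualProducts_injective continuous_dualProducts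

end Projectivization

theorem mk_mem_absSet_iff (B : E →ₗ[ℝ] E →ₗ[ℝ] ℝ) {v : E} (hv : v ≠ 0) :
    mk ℝ v hv ∈ absSet B ↔ B v v = 0 := by
  obtain ⟨a, ha⟩ := exists_smul_eq_mk_rep ℝ v hv
  simp [absSet, ← ha, Units.smul_def]

theorem pmap_eq_mk (γ : E ≃ₗ[ℝ] E) (p : ℙ ℝ E) :
    pmap γ p = mk ℝ (γ p.rep) (γ.map_ne_zero_iff.2 p.rep_nonzero) := by
  conv_lhs => rw [← p.mk_rep]
  rfl

theorem pmap_notMem_absSet {B : E →ₗ[ℝ] E →ₗ[ℝ] ℝ} {γ : E ≃ₗ[ℝ] E}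
    (hγ : ∀ x y, B (γ x) (γ y) = B x y) {p : ℙ ℝ E} (hp : p ∈ hypSet B) :
    pmap γ p ∉ absSet B := by
  rw [pmap_eq_mk, mk_mem_absSet_iff, hγ]
  exact hp.ne'

theorem porbit_eq_image (Γ : Subgroup (E ≃ₗ[ℝ] E)) (a : ℙ ℝ E) :
    porbit Γ a = (pmap · a) '' Γ := by
  ext y
  simp [porbit, eq_comm]

end ProjectiveSpace

theorem Ultrafilter.exists_tendsto_normalize {E ι : Type*} [NormedAddCommGroup E]
    [NormedSpace ℝ E] [ProperSpace E] (𝒱 : Ultrafilter ι) {w : ι → E} (hw : ∀ i, w i ≠ 0) :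
    ∃ z ∈ Metric.sphere (0 : E) 1, Tendsto (fun i => ‖w i‖⁻¹ • w i) 𝒱 (𝓝 z) :=
  (isCompact_sphere 0 1).ultrafilter_le_nhds (𝒱.map _) <| le_principal_iff.2 <|
    mem_map.2 <| univ_mem' fun i => by simp [norm_smul, hw i]

theorem Filter.Tendsto.bilinear_apply {E F G ι : Type*} [NormedAddCommGroup E]
    [NormedSpace ℝ E] [FiniteDimensional ℝ E] [NormedAddCommGroup F] [NormedSpace ℝ F]
    [FiniteDimensional ℝ F] [NormedAddCommGroup G] [NormedSpace ℝ G] (B : E →ₗ[ℝ] F →ₗ[ℝ] G)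
    {l : Filter ι} {s : ι → E} {t : ι → F} {z : E} {z' : F} (hs : Tendsto s l (𝓝 z))
    (ht : Tendsto t l (𝓝 z')) :
    Tendsto (fun i => B (s i) (t i)) l (𝓝 (B z z')) :=
  (B.toContinuousBilinearMap.continuous₂.tendsto (z, z')).comp (hs.prodMk_nhds ht)

theorem LinearMap.apply_self_eq_sum_of_isOrthoᵢ {R M ι : Type*} [CommRing R] [AddCommGroup M]
    [Module R M] [Fintype ι] {B : M →ₗ[R] M →ₗ[R] R} (b : Module.Basis ι R M)
    (hb : B.IsOrthoᵢ b) (x : M) :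
    B x x = ∑ i, b.repr x i * b.repr x i * B (b i) (b i) := by
  conv_lhs => rw [← b.sum_repr x]
  simp only [map_sum, map_smul, LinearMap.sum_apply, LinearMap.smul_apply, smul_eq_mul]
  refine Finset.sum_congr rfl fun i _ => ?_
  rw [Finset.sum_eq_single i (fun j _ hji => by rw [hb hji, mul_zero]) (by simp)]
  ring

theorem hasSigOneN.exists_negDef_on_ker {E : Type*} [NormedAddCommGroup E] [NormedSpace ℝ E]
    {n : ℕ} {B : E →ₗ[ℝ] E →ₗ[ℝ] ℝ} (h : hasSigOneN n B) :
    ∃ f : E →ₗ[ℝ] ℝ, ∀ x, f x = 0 → x ≠ 0 → B x x < 0 := by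
  obtain ⟨b, hdiag, -, hneg⟩ := h
  refine ⟨b.coord 0, fun x hx0 hx => ?_⟩
  rw [Module.Basis.coord_apply] at hx0
  obtain ⟨i, hi⟩ : ∃ i, b.repr x i ≠ 0 :=
    not_forall.1 fun h => hx (b.ext_elem (by simpa using h))
  have hi0 : i ≠ 0 := by rintro rfl; exact hi hx0
  rw [LinearMap.apply_self_eq_sum_of_isOrthoᵢ b hdiag]
  refine Finset.sum_neg' (fun j _ => ?_) ⟨i, Finset.mem_univ _, ?_⟩
  · rcases eq_or_ne j 0 with rfl | hj
    · simp [hx0]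
    · exact mul_nonpos_of_nonneg_of_nonpos (mul_self_nonneg _) (hneg j hj).le
  · exact mul_neg_of_pos_of_neg (mul_self_pos.2 hi) (hneg i hi0)

theorem LinearMap.apply_smul_smul_sq_mul {R M : Type*} [CommRing R] [AddCommGroup M] [Module R M]
    (B : M →ₗ[R] M →ₗ[R] R) (α β : R) (u v : M) :
    B (α • u) (β • v) ^ 2 * (B u u * B v v) =
      B (α • u) (α • u) * B (β • v) (β • v) * B u v ^ 2 := by
  simp only [map_smul, LinearMap.smul_apply, smul_eq_mul]
  ring

section LightCone

variable {E : Type*} [AddCommGroup E] [Module ℝ E] {B : E →ₗ[ℝ] E →ₗ[ℝ] ℝ}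

theorem exists_smul_eq_of_isotropic_of_isOrtho (hsymm : ∀ x y, B x y = B y x) {f : E →ₗ[ℝ] ℝ}
    (hf : ∀ x, f x = 0 → x ≠ 0 → B x x < 0) {z w : E} (hz : z ≠ 0) (hzz : B z z = 0)
    (hzw : B z w = 0) (hww : 0 ≤ B w w) : ∃ c : ℝ, c • z = w := by
  have hfz : f z ≠ 0 := fun h => (hf z h hz).ne hzz
  refine ⟨f w / f z, (sub_eq_zero.1 ?_).symm⟩
  by_contra hne
  have hker : f (w - (f w / f z) • z) = 0 := by
    rw [map_sub, map_smul, smul_eq_mul, div_mul_cancel₀ _ hfz, sub_self]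
  have hsq : B (w - (f w / f z) • z) (w - (f w / f z) • z) = B w w := by
    simp only [map_sub, map_smul, LinearMap.sub_apply, LinearMap.smul_apply, smul_eq_mul,
      hzz, hzw, hsymm w z]
    ring
  exact (hf _ hker hne).not_ge (hsq ▸ hww)

end LightCone

section LimitSet

variable {B : V →ₗ[ℝ] V →ₗ[ℝ] ℝ} {f : V →ₗ[ℝ] ℝ} {a b x : ℙ ℝ V}

theorem tendsto_pmap_of_tendsto_isotropic_ultrafilter (hsymm : ∀ x y, B x y = B y x)
    (hf : ∀ x, f x = 0 → x ≠ 0 → B x x < 0) {𝒱 : Ultrafilter (V ≃ₗ[ℝ] V)}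
    (hinv : ∀ᶠ γ : V ≃ₗ[ℝ] V in 𝒱, ∀ x y, B (γ x) (γ y) = B x y)
    (ha : a ∈ hypSet B) (hb : b ∈ hypSet B) (hx : x ∈ absSet B) (hax : Tendsto (pmap · a) 𝒱 (𝓝 x)) :
    Tendsto (pmap · b) 𝒱 (𝓝 x) := by
  set u := a.rep
  set v := b.rep
  have hu (γ : V ≃ₗ[ℝ] V) : γ u ≠ 0 := γ.map_ne_zero_iff.2 a.rep_nonzero
  have hv (γ : V ≃ₗ[ℝ] V) : γ v ≠ 0 := γ.map_ne_zero_iff.2 b.rep_nonzero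
  obtain ⟨z, hz1, hz⟩ := 𝒱.exists_tendsto_normalize hu
  obtain ⟨z', hz1', hz'⟩ := 𝒱.exists_tendsto_normalize hv
  have hz0 : z ≠ 0 := ne_zero_of_mem_unit_sphere ⟨z, hz1⟩
  have hz0' : z' ≠ 0 := ne_zero_of_mem_unit_sphere ⟨z', hz1'⟩
  have hzx : mk ℝ z hz0 = x := by
    refine tendsto_nhds_unique (tendsto_mk_of_tendsto_normalize hu hz0 hz) ?_
    simpa only [pmap_eq_mk] using hax
  have hzz : B z z = 0 := (mk_mem_absSet_iff B hz0).1 (hzx ▸ hx)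
  have hz'z' : 0 ≤ B z' z' := by
    refine ge_of_tendsto (hz'.bilinear_apply B hz') (hinv.mono fun γ hγ => ?_)
    simp only [map_smul, LinearMap.smul_apply, smul_eq_mul, hγ, ← mul_assoc]
    exact mul_nonneg (mul_self_nonneg _) hb.le
  have hzz' : B z z' = 0 := by
    have key := tendsto_nhds_unique_of_eventuallyEq
      (((hz.bilinear_apply B hz').pow 2).mul_const (B u u * B v v))
      (((hz.bilinear_apply B hz).mul (hz'.bilinear_apply B hz')).mul_const (B u v ^ 2))
      (hinv.mono fun γ hγ => by
        simpa only [hγ] using LinearMap.apply_smul_smul_sq_mul B ‖γ u‖⁻¹ ‖γ v‖⁻¹ (γ u) (γ v))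
    rw [hzz, zero_mul, zero_mul] at key
    exact pow_eq_zero_iff two_ne_zero |>.1 <|
      (mul_eq_zero.1 key).resolve_right (mul_pos ha hb).ne'
  obtain ⟨c, hc⟩ := exists_smul_eq_of_isotropic_of_isOrtho hsymm hf hz0 hzz hzz' hz'z'
  have hz'x : mk ℝ z' hz0' = x := by
    rw [← hzx, mk_eq_mk_iff']
    exact ⟨c, hc⟩
  simpa only [pmap_eq_mk, hz'x] using tendsto_mk_of_tendsto_normalize hv hz0' hz'

theorem tendsto_pmap_of_tendsto_isotropic (hsymm : ∀ x y, B x y = B y x)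
    (hf : ∀ x, f x = 0 → x ≠ 0 → B x x < 0) {l : Filter (V ≃ₗ[ℝ] V)}
    (hinv : ∀ᶠ γ in l, ∀ x y, B (γ x) (γ y) = B x y) (ha : a ∈ hypSet B) (hb : b ∈ hypSet B)
    (hx : x ∈ absSet B) (hax : Tendsto (pmap · a) l (𝓝 x)) :
    Tendsto (pmap · b) l (𝓝 x) :=
  (tendsto_iff_ultrafilter _ _ _).2 fun _ h𝒱 =>
    tendsto_pmap_of_tendsto_isotropic_ultrafilter hsymm hf (h𝒱 hinv) ha hb hx (hax.mono_left h𝒱)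

theorem limitSetOf_subset (hsymm : ∀ x y, B x y = B y x)
    (hf : ∀ x, f x = 0 → x ≠ 0 → B x x < 0)
    {Γ : Subgroup (V ≃ₗ[ℝ] V)} (hΓ : ∀ γ ∈ Γ, ∀ x y, B (γ x) (γ y) = B x y)
    (ha : a ∈ hypSet B) (hb : b ∈ hypSet B) : limitSetOf B Γ a ⊆ limitSetOf B Γ b := by
  rintro x ⟨hx, hxa⟩
  refine ⟨hx, ?_⟩
  set l := comap (pmap · a) (𝓝 x) ⊓ 𝓟 (Γ : Set (V ≃ₗ[ℝ] V))
  have hl : ∀ᶠ γ in l, γ ∈ Γ := mem_inf_of_right (mem_principal_self _)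
  have : l.NeBot := by
    rw [neBot_inf_comap_iff_map', map_principal, ← porbit_eq_image]
    exact mem_closure_iff_clusterPt.1 (closure_mono Set.sdiff_subset hxa)
  have hbx : Tendsto (pmap · b) l (𝓝 x) :=
    tendsto_pmap_of_tendsto_isotropic hsymm hf (hl.mono hΓ) ha hb hx
      (tendsto_comap.mono_left inf_le_left)
  refine mem_closure_of_tendsto hbx (hl.mono fun γ hγ => ⟨⟨γ, hγ, rfl⟩, fun h => ?_⟩)
  exact pmap_notMem_absSet (hΓ γ hγ) hb (h ▸ hx)

end LimitSet

theorem stmt_8 (n : ℕ) (B : V →ₗ[ℝ] V →ₗ[ℝ] ℝ)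
    (hsymm : ∀ x y, B x y = B y x)
    (hsig : hasSigOneN n B)
    (Γ : Subgroup (V ≃ₗ[ℝ] V))
    (hΓ : ∀ γ ∈ Γ, ∀ x y, B (γ x) (γ y) = B x y)
    (a b : Projectivization ℝ V) (ha : a ∈ hypSet B) (hb : b ∈ hypSet B) :
    limitSetOf B Γ a = limitSetOf B Γ b := by
  obtain ⟨f, hf⟩ := hsig.exists_negDef_on_ker
  exact (limitSetOf_subset hsymm hf hΓ ha hb).antisymm (limitSetOf_subset hsymm hf hΓ hb ha)
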